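/- arXiv:1612.09232 — 2 statements merged into one kernel-verified Lean document; each statement's English description precedes it below -/
import Mathlib

section
/- Let a be a real-valued function on the set P of primes such that (H0) Σ_{p∈P} |a(p)|^8 p^{-s} converges for every s>1; (H4) limsup_{s→1⁺} (Σ_{p∈P} a(p)^4 p^{-s})/log(1/(s−1)) = 2; and (HP) for every subset S of P, limsup_{s→1⁺} (Σ_{p∈S} p^{-s})/log(1/(s−1)) ≤ 1. Set A := {p ∈ P : a(p) > 0}, B := {p ∈ P : a(p) ≤ 0}, and d := limsup_{s→1⁺} (Σ_{p∈B} |a(p)|^4 p^{-s})/log(1/(s−1)). Let 0 < β < 1 and let S_β := {p ∈ A : |a(p)|^4 ≥ (2−d)β}. Then limsup_{s→1⁺} (Σ_{p∈S_β} |a(p)|^4 p^{-s})/log(1/(s−1)) ≥ (2−d)(1−β). -/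
open Filter Real Set Topology

/-!
Write `u(S)` for the weighted upper density `dirichletLimsup S |a|^4`. The primes split as
`S_β ∪ (A \ S_β) ∪ B` and `u` is subadditive, so `2 ≤ u(S_β) + u(A \ S_β) + d`. On `A \ S_β` the
weight `|a|^4` is below `(2 - d) β`, and by `(HP)` these primes have upper density at most `1`,
so `u(A \ S_β) ≤ (2 - d) β`.

A `limsup` of a real function that is unbounded above is the junk value `0`, so the argument
also needs the ratios to be bounded above as `s → 1⁺`. For `|a|^4` on `P` this follows from
`(H4)`; for the counting function of a set of primes it is the Euler-product bound
`∑_{p ∈ S} p^{-s} ≤ log ζ(s) ≤ log (1 + 1/(s - 1))`.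
-/

/-- The partial Dirichlet series `∑_{p ∈ S} g(p) p^{-s}`. -/
noncomputable def primeDirichletSum (S : Set ℕ) (g : ℕ → ℝ) (s : ℝ) : ℝ :=
  ∑' p : S, g p * ((p : ℕ) : ℝ) ^ (-s)

/-- `limsup_{s → 1⁺} (∑_{p ∈ S} g(p) p^{-s}) / log(1/(s-1))`. -/
noncomputable def dirichletLimsup (S : Set ℕ) (g : ℕ → ℝ) : ℝ :=
  Filter.limsup (fun s : ℝ => primeDirichletSum S g s / Real.log (1 / (s - 1)))
    (𝓝[>] (1 : ℝ))

lemma tsum_natCast_rpow_neg_le {s : ℝ} (hs : 1 < s) :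
    ∑' n : ℕ, (n : ℝ) ^ (-s) ≤ 1 + 1 / (s - 1) := by
  have hsum : Summable fun n : ℕ => (n : ℝ) ^ (-s) := summable_nat_rpow.mpr (by linarith)
  have htail : ∑' n : ℕ, ((n + 1 + 1 : ℕ) : ℝ) ^ (-s) ≤ 1 / (s - 1) := by
    have hanti : AntitoneOn (fun x : ℝ => x ^ (-s)) (Ici ((1 : ℕ) : ℝ)) := fun x hx y _ hxy =>
      rpow_le_rpow_of_nonpos (zero_lt_one.trans_le (by simpa using hx)) hxy (by linarith)
    refine (hanti.tsum_comp_add_le_integral 1 ?_ fun t ht => ?_).trans_eq ?_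
    · simpa using integrableOn_Ioi_rpow_of_lt (by linarith : -s < -1) zero_lt_one
    · exact rpow_nonneg (by simp only [Nat.cast_one, mem_Ioi] at ht; linarith) _
    · rw [Nat.cast_one, integral_Ioi_rpow_of_lt (by linarith) zero_lt_one, one_rpow,
        show -s + 1 = -(s - 1) by ring, neg_div_neg_eq]
  rw [hsum.tsum_eq_zero_add, ((summable_nat_add_iff 1).mpr hsum).tsum_eq_zero_add]
  simp only [Nat.cast_zero, zero_rpow (neg_ne_zero.mpr (by linarith : s ≠ 0)), zero_add,
    Nat.cast_one, one_rpow]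
  linarith

lemma sum_primesBelow_rpow_neg_le_log {s : ℝ} (hs : 1 < s) (N : ℕ) :
    ∑ p ∈ N.primesBelow, (p : ℝ) ^ (-s) ≤ log (1 + 1 / (s - 1)) := by
  let f : ℕ →* ℝ :=
    { toFun n := (n : ℝ) ^ (-s)
      map_one' := by simp
      map_mul' m n := by push_cast; exact mul_rpow m.cast_nonneg n.cast_nonneg }
  have hsum : Summable f := summable_nat_rpow.mpr (by linarith)
  have hexp : ∀ p ∈ N.primesBelow, exp ((p : ℝ) ^ (-s)) ≤ (1 - f p)⁻¹ := fun p hp => by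
    have hp := (Nat.mem_primesBelow.mp hp).2
    show exp ((p : ℝ) ^ (-s)) ≤ (1 - (p : ℝ) ^ (-s))⁻¹
    simpa only [one_div] using exp_bound_div_one_sub_of_interval (rpow_nonneg p.cast_nonneg _)
      (rpow_lt_one_of_one_lt_of_neg (by exact_mod_cast hp.one_lt) (by linarith))
  refine (le_log_iff_exp_le (by have := sub_pos.mpr hs; positivity)).mpr ?_
  calc exp (∑ p ∈ N.primesBelow, (p : ℝ) ^ (-s))
      = ∏ p ∈ N.primesBelow, exp ((p : ℝ) ^ (-s)) := exp_sum _ _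
    _ ≤ ∏ p ∈ N.primesBelow, (1 - f p)⁻¹ :=
        Finset.prod_le_prod (fun _ _ => (exp_pos _).le) hexp
    _ = ∑' m : N.smoothNumbers, f m :=
        EulerProduct.prod_primesBelow_geometric_eq_tsum_smoothNumbers hsum N
    _ ≤ ∑' n : ℕ, f n := hsum.tsum_subtype_le _ _ fun n => rpow_nonneg n.cast_nonneg _
    _ ≤ 1 + 1 / (s - 1) := tsum_natCast_rpow_neg_le hs

lemma tsum_rpow_neg_le_log_of_subset_primes {S : Set ℕ} (hS : S ⊆ {p | p.Prime}) {s : ℝ}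
    (hs : 1 < s) : ∑' p : S, (p : ℝ) ^ (-s) ≤ log (1 + 1 / (s - 1)) := by
  classical
  rw [tsum_subtype S fun n : ℕ => (n : ℝ) ^ (-s)]
  refine tsum_le_of_sum_range_le
    (fun n => indicator_nonneg (fun n _ => rpow_nonneg n.cast_nonneg _) n) fun N => ?_
  calc ∑ n ∈ Finset.range N, S.indicator (fun n : ℕ => (n : ℝ) ^ (-s)) n
      = ∑ n ∈ Finset.range N with n ∈ S, (n : ℝ) ^ (-s) :=
        Finset.sum_indicator_eq_sum_filter _ _ _ _
    _ ≤ ∑ p ∈ N.primesBelow, (p : ℝ) ^ (-s) := by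
        refine Finset.sum_le_sum_of_subset_of_nonneg (fun n hn => ?_)
          fun n _ _ => rpow_nonneg n.cast_nonneg _
        rw [Finset.mem_filter, Finset.mem_range] at hn
        exact Nat.mem_primesBelow.mpr ⟨hn.1, hS hn.2⟩
    _ ≤ log (1 + 1 / (s - 1)) := sum_primesBelow_rpow_neg_le_log hs N

lemma summable_mul_rpow_neg_of_summable_sq {S : Set ℕ} {g : ℕ → ℝ} {s : ℝ} (hs : 1 < s)
    (h : Summable fun p : S => g p ^ 2 * (p : ℝ) ^ (-s)) :
    Summable fun p : S => g p * (p : ℝ) ^ (-s) := by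
  have hsum : Summable fun p : S => (p : ℝ) ^ (-s) :=
    (summable_nat_rpow.mpr (by linarith)).subtype S
  refine Summable.of_norm_bounded ((h.add hsum).div_const 2) fun p => ?_
  have ht : 0 ≤ (p : ℝ) ^ (-s) := rpow_nonneg (Nat.cast_nonneg _) _
  rw [norm_mul, norm_of_nonneg ht, norm_eq_abs]
  nlinarith [mul_nonneg (sq_nonneg (|g p| - 1)) ht, sq_abs (g p)]

lemma tendsto_log_one_div_sub_one : Tendsto (fun s : ℝ => log (1 / (s - 1))) (𝓝[>] 1) atTop := by
  have : Tendsto (fun s : ℝ => s - 1) (𝓝[>] 1) (𝓝[>] 0) := by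
    refine tendsto_nhdsWithin_iff.mpr ⟨?_, eventually_nhdsWithin_of_forall fun s hs =>
      mem_Ioi.mpr (sub_pos.mpr hs)⟩
    simpa using (tendsto_id.sub_const 1).mono_left (nhdsWithin_le_nhds (a := (1 : ℝ)))
  exact (tendsto_log_atTop.comp (tendsto_inv_nhdsGT_zero.comp this)).congr fun s => by
    simp [Function.comp_def]

lemma eventually_log_one_div_sub_one_pos : ∀ᶠ s : ℝ in 𝓝[>] 1, 0 < log (1 / (s - 1)) :=
  tendsto_log_one_div_sub_one.eventually_gt_atTop 0

noncomputable def primeDirichletRatio (S : Set ℕ) (g : ℕ → ℝ) (s : ℝ) : ℝ :=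
  primeDirichletSum S g s / log (1 / (s - 1))

lemma dirichletLimsup_eq_limsup (S : Set ℕ) (g : ℕ → ℝ) :
    dirichletLimsup S g = limsup (primeDirichletRatio S g) (𝓝[>] 1) := rfl

section PrimeDirichletRatio

variable {S T : Set ℕ} {g : ℕ → ℝ}

lemma summable_mul_rpow_neg_of_subset {s : ℝ} (hST : S ⊆ T)
    (h : Summable fun p : T => g p * (p : ℝ) ^ (-s)) :
    Summable fun p : S => g p * (p : ℝ) ^ (-s) :=
  h.comp_injective (inclusion_injective hST)

lemma primeDirichletSum_nonneg (hg : 0 ≤ g) (s : ℝ) : 0 ≤ primeDirichletSum S g s :=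
  tsum_nonneg fun p => mul_nonneg (hg p) (rpow_nonneg (Nat.cast_nonneg _) _)

lemma eventually_primeDirichletRatio_nonneg (hg : 0 ≤ g) :
    0 ≤ᶠ[𝓝[>] 1] primeDirichletRatio S g := by
  filter_upwards [eventually_log_one_div_sub_one_pos] with s hL
  exact div_nonneg (primeDirichletSum_nonneg hg s) hL.le

lemma isBoundedUnder_ge_primeDirichletRatio (hg : 0 ≤ g) :
    IsBoundedUnder (· ≥ ·) (𝓝[>] 1) (primeDirichletRatio S g) :=
  isBoundedUnder_of_eventually_ge (eventually_primeDirichletRatio_nonneg hg)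

lemma primeDirichletSum_mono_set (hg : 0 ≤ g) (hST : S ⊆ T) {s : ℝ}
    (hsum : Summable fun p : T => g p * (p : ℝ) ^ (-s)) :
    primeDirichletSum S g s ≤ primeDirichletSum T g s :=
  tsum_comp_le_tsum_of_inj hsum (fun p => mul_nonneg (hg p) (rpow_nonneg (Nat.cast_nonneg _) _))
    (inclusion_injective hST)

lemma primeDirichletRatio_eventuallyLE_of_subset (hg : 0 ≤ g) (hST : S ⊆ T)
    (hsum : ∀ s : ℝ, 1 < s → Summable fun p : T => g p * (p : ℝ) ^ (-s)) :
    primeDirichletRatio S g ≤ᶠ[𝓝[>] 1] primeDirichletRatio T g := by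
  filter_upwards [self_mem_nhdsWithin, eventually_log_one_div_sub_one_pos] with s hs hL
  exact div_le_div_of_nonneg_right (primeDirichletSum_mono_set hg hST (hsum s hs)) hL.le

lemma isBoundedUnder_primeDirichletRatio_of_subset (hg : 0 ≤ g) (hST : S ⊆ T)
    (hsum : ∀ s : ℝ, 1 < s → Summable fun p : T => g p * (p : ℝ) ^ (-s))
    (hT : IsBoundedUnder (· ≤ ·) (𝓝[>] 1) (primeDirichletRatio T g)) :
    IsBoundedUnder (· ≤ ·) (𝓝[>] 1) (primeDirichletRatio S g) :=
  hT.mono_le (primeDirichletRatio_eventuallyLE_of_subset hg hST hsum)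

lemma dirichletLimsup_mono_set (hg : 0 ≤ g) (hST : S ⊆ T)
    (hsum : ∀ s : ℝ, 1 < s → Summable fun p : T => g p * (p : ℝ) ^ (-s))
    (hT : IsBoundedUnder (· ≤ ·) (𝓝[>] 1) (primeDirichletRatio T g)) :
    dirichletLimsup S g ≤ dirichletLimsup T g :=
  limsup_le_limsup (primeDirichletRatio_eventuallyLE_of_subset hg hST hsum)
    (isBoundedUnder_ge_primeDirichletRatio hg).isCoboundedUnder_le hT

lemma dirichletLimsup_union_le (hg : 0 ≤ g) (hST : Disjoint S T)
    (hsum : ∀ s : ℝ, 1 < s → Summable fun p : ↥(S ∪ T) => g p * (p : ℝ) ^ (-s))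
    (hbdd : IsBoundedUnder (· ≤ ·) (𝓝[>] 1) (primeDirichletRatio (S ∪ T) g)) :
    dirichletLimsup (S ∪ T) g ≤ dirichletLimsup S g + dirichletLimsup T g := by
  have hsplit : primeDirichletRatio (S ∪ T) g =ᶠ[𝓝[>] 1]
      primeDirichletRatio S g + primeDirichletRatio T g := by
    filter_upwards [self_mem_nhdsWithin] with s hs
    simp only [primeDirichletRatio, primeDirichletSum, Pi.add_apply, ← add_div]
    rw [Summable.tsum_union_disjoint (f := fun n : ℕ => g n * (n : ℝ) ^ (-s)) hST
      (summable_mul_rpow_neg_of_subset subset_union_left (hsum s hs))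
      (summable_mul_rpow_neg_of_subset subset_union_right (hsum s hs))]
  rw [dirichletLimsup_eq_limsup, limsup_congr hsplit]
  exact limsup_add_le (isBoundedUnder_ge_primeDirichletRatio hg)
    (isBoundedUnder_primeDirichletRatio_of_subset hg subset_union_left hsum hbdd)
    (isBoundedUnder_ge_primeDirichletRatio hg).isCoboundedUnder_le
    (isBoundedUnder_primeDirichletRatio_of_subset hg subset_union_right hsum hbdd)

lemma dirichletLimsup_le_add_sdiff (hg : 0 ≤ g) (hST : S ⊆ T)
    (hsum : ∀ s : ℝ, 1 < s → Summable fun p : T => g p * (p : ℝ) ^ (-s))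
    (hbdd : IsBoundedUnder (· ≤ ·) (𝓝[>] 1) (primeDirichletRatio T g)) :
    dirichletLimsup T g ≤ dirichletLimsup S g + dirichletLimsup (T \ S) g := by
  have h := dirichletLimsup_union_le (S := S) (T := T \ S) hg disjoint_sdiff_right
  rw [union_sdiff_cancel hST] at h
  exact h hsum hbdd

lemma isBoundedUnder_primeDirichletRatio_one (hS : S ⊆ {p | p.Prime}) :
    IsBoundedUnder (· ≤ ·) (𝓝[>] 1) (primeDirichletRatio S fun _ => 1) := by
  refine isBoundedUnder_of_eventually_le (a := 2) ?_
  filter_upwards [Ioo_mem_nhdsGT one_lt_two,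
    tendsto_log_one_div_sub_one.eventually_ge_atTop (log 2)] with s ⟨hs1, hs2⟩ hL
  have hL0 : 0 < log (1 / (s - 1)) := (log_pos one_lt_two).trans_le hL
  have hinv : 1 ≤ 1 / (s - 1) := by rw [le_div_iff₀ (sub_pos.mpr hs1)]; linarith
  rw [primeDirichletRatio, div_le_iff₀ hL0]
  calc primeDirichletSum S (fun _ => 1) s = ∑' p : S, (p : ℝ) ^ (-s) := by
        simp only [primeDirichletSum, one_mul]
    _ ≤ log (1 + 1 / (s - 1)) := tsum_rpow_neg_le_log_of_subset_primes hS hs1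
    _ ≤ log (2 * (1 / (s - 1))) := log_le_log (by positivity) (by linarith)
    _ = log 2 + log (1 / (s - 1)) := log_mul two_ne_zero (by positivity)
    _ ≤ 2 * log (1 / (s - 1)) := by linarith

lemma primeDirichletSum_le_mul_of_le {c : ℝ} (hg : 0 ≤ g) (hgc : ∀ p ∈ S, g p ≤ c) {s : ℝ}
    (hs : 1 < s) : primeDirichletSum S g s ≤ c * primeDirichletSum S (fun _ => 1) s := by
  have hsum : Summable fun p : S => c * (p : ℝ) ^ (-s) :=
    ((summable_nat_rpow.mpr (by linarith)).subtype S).mul_left c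
  have hle (p : S) : g p * (p : ℝ) ^ (-s) ≤ c * (p : ℝ) ^ (-s) :=
    mul_le_mul_of_nonneg_right (hgc p p.2) (rpow_nonneg (Nat.cast_nonneg _) _)
  simp only [primeDirichletSum, one_mul, ← tsum_mul_left]
  exact Summable.tsum_le_tsum hle (hsum.of_nonneg_of_le
    (fun p => mul_nonneg (hg p) (rpow_nonneg (Nat.cast_nonneg _) _)) hle) hsum

lemma dirichletLimsup_le_mul_of_le {c : ℝ} (hS : S ⊆ {p | p.Prime}) (hg : 0 ≤ g) (hc : 0 ≤ c)
    (hgc : ∀ p ∈ S, g p ≤ c) : dirichletLimsup S g ≤ c * dirichletLimsup S fun _ => 1 := by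
  have hcount := isBoundedUnder_primeDirichletRatio_one hS
  have hcount_nonneg := eventually_primeDirichletRatio_nonneg (S := S) fun _ => zero_le_one
  have hc' : ∃ᶠ _ in 𝓝[>] (1 : ℝ), 0 ≤ c := .of_forall fun _ => hc
  have hle : primeDirichletRatio S g ≤ᶠ[𝓝[>] 1]
      (fun _ => c) * primeDirichletRatio S fun _ => 1 := by
    filter_upwards [self_mem_nhdsWithin, eventually_log_one_div_sub_one_pos] with s hs hL
    rw [Pi.mul_apply, primeDirichletRatio, primeDirichletRatio, mul_div_assoc']
    exact div_le_div_of_nonneg_right (primeDirichletSum_le_mul_of_le hg hgc hs) hL.le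
  calc dirichletLimsup S g
      ≤ limsup ((fun _ => c) * primeDirichletRatio S fun _ => 1) (𝓝[>] 1) :=
        limsup_le_limsup hle (isBoundedUnder_ge_primeDirichletRatio hg).isCoboundedUnder_le
          (isBoundedUnder_le_mul_of_nonneg hc' isBoundedUnder_const hcount_nonneg hcount)
    _ ≤ limsup (fun _ => c) (𝓝[>] 1) * dirichletLimsup S fun _ => 1 :=
        limsup_mul_le hc' isBoundedUnder_const hcount_nonneg hcount
    _ = c * dirichletLimsup S fun _ => 1 := by rw [limsup_const]

end PrimeDirichletRatio

theorem limsup_restricted_fourth_power_general (a : ℕ → ℝ) (P : Set ℕ)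
    (hP : P = {p : ℕ | Nat.Prime p})
    (H0 : ∀ s : ℝ, 1 < s → Summable (fun p : P => |a p| ^ 8 * ((p : ℕ) : ℝ) ^ (-s)))
    (H4 : dirichletLimsup P (fun p => a p ^ 4) = 2)
    (HP : ∀ S : Set ℕ, S ⊆ P → dirichletLimsup S (fun _ => 1) ≤ 1)
    (A B : Set ℕ) (hA : A = {p ∈ P | 0 < a p}) (hB : B = {p ∈ P | a p ≤ 0})
    (d : ℝ) (hd : d = dirichletLimsup B (fun p => |a p| ^ 4))
    (β : ℝ) (hβ0 : 0 < β)
    (Sβ : Set ℕ) (hSβ : Sβ = {p ∈ A | (2 - d) * β ≤ |a p| ^ 4}) :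
    (2 - d) * (1 - β) ≤ dirichletLimsup Sβ (fun p => |a p| ^ 4) := by
  set w : ℕ → ℝ := fun p => |a p| ^ 4
  have hw : 0 ≤ w := fun p => by positivity
  have hsum (s : ℝ) (hs : 1 < s) : Summable fun p : P => w p * (p : ℝ) ^ (-s) :=
    summable_mul_rpow_neg_of_summable_sq hs
      (by simpa only [w, ← pow_mul, Nat.reduceMul] using H0 s hs)
  have hPw : dirichletLimsup P w = 2 := by simpa only [w, (by decide : Even 4).pow_abs] using H4
  have hbdd : IsBoundedUnder (· ≤ ·) (𝓝[>] 1) (primeDirichletRatio P w) := by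
    by_contra h
    exact two_ne_zero (hPw.symm.trans (Real.limsup_of_not_isBoundedUnder h))
  have hAP : A ⊆ P := hA ▸ sep_subset _ _
  have hSβA : Sβ ⊆ A := hSβ ▸ sep_subset _ _
  have hPA : P \ A = B := by ext p; simp [hA, hB]
  have hd2 : d ≤ 2 := hd ▸ hPw ▸ dirichletLimsup_mono_set hw (hPA ▸ sdiff_subset) hsum hbdd
  have hsplitP := dirichletLimsup_le_add_sdiff hw hAP hsum hbdd
  have hsplitA := dirichletLimsup_le_add_sdiff hw hSβA
    (fun s hs => summable_mul_rpow_neg_of_subset hAP (hsum s hs))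
    (isBoundedUnder_primeDirichletRatio_of_subset hw hAP hsum hbdd)
  have hsmall : dirichletLimsup (A \ Sβ) w ≤ (2 - d) * β := by
    have hc : 0 ≤ (2 - d) * β := mul_nonneg (by linarith) hβ0.le
    have hgc (p : ℕ) (hp : p ∈ A \ Sβ) : w p ≤ (2 - d) * β :=
      le_of_not_ge fun h => hp.2 (hSβ ▸ ⟨hp.1, h⟩)
    have hRP : A \ Sβ ⊆ P := sdiff_subset.trans hAP
    calc dirichletLimsup (A \ Sβ) w ≤ (2 - d) * β * dirichletLimsup (A \ Sβ) fun _ => 1 :=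
          dirichletLimsup_le_mul_of_le (hRP.trans hP.le) hw hc hgc
      _ ≤ (2 - d) * β := mul_le_of_le_one_right hc (HP _ hRP)
  rw [hPA, ← hd, hPw] at hsplitP
  linarith

/-- With `S_β` the set of primes `p ∈ A` with `|a p|^4 ≥ (2-d)β`, the weighted density of
`|a|^4` over `S_β` is at least `(2-d)(1-β)`. -/
theorem limsup_restricted_fourth_power (a : ℕ → ℝ) (P : Set ℕ)
    (hP : P = {p : ℕ | Nat.Prime p})
    (H0 : ∀ s : ℝ, 1 < s → Summable (fun p : P => |a p| ^ 8 * ((p : ℕ) : ℝ) ^ (-s)))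
    (H4 : dirichletLimsup P (fun p => a p ^ 4) = 2)
    (HP : ∀ S : Set ℕ, S ⊆ P → dirichletLimsup S (fun _ => 1) ≤ 1)
    (A B : Set ℕ) (hA : A = {p ∈ P | 0 < a p}) (hB : B = {p ∈ P | a p ≤ 0})
    (d : ℝ) (hd : d = dirichletLimsup B (fun p => |a p| ^ 4))
    (β : ℝ) (hβ0 : 0 < β) (hβ1 : β < 1)
    (Sβ : Set ℕ) (hSβ : Sβ = {p ∈ A | (2 - d) * β ≤ |a p| ^ 4}) :
    (2 - d) * (1 - β) ≤ dirichletLimsup Sβ (fun p => |a p| ^ 4) :=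
  limsup_restricted_fourth_power_general a P hP H0 H4 HP A B hA hB d hd β hβ0 Sβ hSβ
end

section
/- For every real number d with 1.258 < d ≤ 2, define c(d) := d^{5/4} / (14 − (2−d)^2)^{1/4} and α(d) := ((2−d)·0.495)^{3/4} · (14 − (2−d)^2)^{1/4} / d^{5/4}. Then 0 ≤ α(d) < 1 and c(d)^2 · (1 − α(d))^2 > 5/100. -/
open Real

/-!
Since `c · α = w` with `w := ((2 - d) · 0.495)^{3/4}`, both claims follow from `0.22361 + w < c`,
because then `c (1 - α) = c - w > 0.22361 > √0.05`. The minimum of `c - w` is `0.22390…`, at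
`d = 1.258`, so we split `[1.258, 2]` at `1.2735` and on each piece bound `d^{5/4}`
below at the left end, `(14 - (2 - d)^2)^{1/4}` above at the right end and `w` above at the left
end, by rationals compared with the fourth powers.
-/

namespace NumericAlpha

noncomputable def coeffC (d : ℝ) : ℝ := d ^ ((5 : ℝ) / 4) / (14 - (2 - d) ^ 2) ^ ((1 : ℝ) / 4)

noncomputable def coeffW (d : ℝ) : ℝ := ((2 - d) * 0.495) ^ ((3 : ℝ) / 4)

theorem rpow_div_le_of_pow_le {x q : ℝ} {m n : ℕ} (hx : 0 ≤ x) (hq : 0 ≤ q) (hn : n ≠ 0)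
    (h : x ^ m ≤ q ^ n) : x ^ ((m : ℝ) / n) ≤ q := by
  rwa [← pow_le_pow_iff_left₀ (by positivity) hq hn, ← rpow_natCast, ← rpow_mul hx,
    div_mul_cancel₀ _ (by exact_mod_cast hn), rpow_natCast]

theorem le_rpow_div_of_pow_le {x q : ℝ} {m n : ℕ} (hx : 0 ≤ x) (hq : 0 ≤ q) (hn : n ≠ 0)
    (h : q ^ n ≤ x ^ m) : q ≤ x ^ ((m : ℝ) / n) := by
  rwa [← pow_le_pow_iff_left₀ hq (by positivity) hn, ← rpow_natCast (x ^ _), ← rpow_mul hx,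
    div_mul_cancel₀ _ (by exact_mod_cast hn), rpow_natCast]

theorem add_coeffW_lt_coeffC {a b d L M U s : ℝ} (ha : 0 ≤ a) (hb : b ≤ 2) (had : a ≤ d)
    (hdb : d ≤ b) (hL : 0 ≤ L) (hM : 0 < M) (hU : 0 ≤ U) (hL4 : L ^ 4 ≤ a ^ 5)
    (hM4 : 14 - (2 - b) ^ 2 ≤ M ^ 4) (hU4 : ((2 - a) * 0.495) ^ 3 ≤ U ^ 4)
    (hLMU : (s + U) * M < L) :
    s + coeffW d < coeffC d := by
  have hw : 0 ≤ (2 - d) * 0.495 := by nlinarith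
  have hB : 0 < 14 - (2 - d) ^ 2 := by nlinarith
  have hW_le : coeffW d ≤ U := by
    have := rpow_div_le_of_pow_le (m := 3) hw hU four_ne_zero
      (hU4.trans' (pow_le_pow_left₀ hw (by linarith) 3))
    norm_num [coeffW] at this ⊢
    exact this
  have hB_le : (14 - (2 - d) ^ 2) ^ ((1 : ℝ) / 4) ≤ M := by
    have := rpow_div_le_of_pow_le (m := 1) hB.le hM.le four_ne_zero (by nlinarith)
    norm_num at this ⊢
    exact this
  have hL_le : L ≤ d ^ ((5 : ℝ) / 4) := by
    have := le_rpow_div_of_pow_le (m := 5) (ha.trans had) hL four_ne_zero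
      (hL4.trans (pow_le_pow_left₀ ha had 5))
    norm_num at this
    exact this
  calc s + coeffW d ≤ s + U := by linarith
    _ < L / M := (lt_div_iff₀ hM).mpr hLMU
    _ ≤ coeffC d := div_le_div₀ (hL.trans hL_le) hL_le (rpow_pos_of_pos hB _) hB_le

theorem add_coeffW_lt_coeffC_of_mem_Ioc {d : ℝ} (hd : d ∈ Set.Ioc 1.258 2) :
    0.22361 + coeffW d < coeffC d := by
  rcases le_or_gt d 1.2735 with hd' | hd'
  · apply add_coeffW_lt_coeffC (a := 1.258) (b := 1.2735) (L := 1.332296) (M := 1.915842)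
      (U := 0.471799) (had := hd.1.le) (hdb := hd') <;> norm_num
  · apply add_coeffW_lt_coeffC (a := 1.2735) (b := 2) (L := 1.352847) (M := 1.934337)
      (U := 0.464388) (had := hd'.le) (hdb := hd.2) <;> norm_num

theorem div_nonneg_lt_one_and_sq_mul_one_sub_div_sq_gt {c w s : ℝ} (hw : 0 ≤ w) (hs : 0 ≤ s)
    (h : s + w < c) : (0 ≤ w / c ∧ w / c < 1) ∧ c ^ 2 * (1 - w / c) ^ 2 > s ^ 2 := by
  have hc : 0 < c := by linarith
  have hcw : c ^ 2 * (1 - w / c) ^ 2 = (c - w) ^ 2 := by field_simp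
  refine ⟨⟨by positivity, (div_lt_one hc).mpr (by linarith)⟩, ?_⟩
  rw [hcw]
  exact pow_lt_pow_left₀ (by linarith) hs two_ne_zero

end NumericAlpha

open NumericAlpha in
/-- For `1.258 < d ≤ 2`, with `c = d^{5/4}/(14-(2-d)^2)^{1/4}` and
`α = ((2-d)·0.495)^{3/4}·(14-(2-d)^2)^{1/4}/d^{5/4}`, one has `0 ≤ α < 1` and
`c^2 (1-α)^2 > 5/100`. -/
theorem numeric_alpha_inequality (d : ℝ) (hd0 : 1.258 < d) (hd1 : d ≤ 2)
    (c α : ℝ)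
    (hc : c = d ^ ((5 : ℝ) / 4) / (14 - (2 - d) ^ 2) ^ ((1 : ℝ) / 4))
    (hα : α = ((2 - d) * 0.495) ^ ((3 : ℝ) / 4) * (14 - (2 - d) ^ 2) ^ ((1 : ℝ) / 4) /
      d ^ ((5 : ℝ) / 4)) :
    (0 ≤ α ∧ α < 1) ∧ c ^ 2 * (1 - α) ^ 2 > 5 / 100 := by
  have hα_eq : α = coeffW d / coeffC d := by
    rw [hα, coeffW, coeffC, div_div_eq_mul_div]
  rw [← coeffC] at hc
  subst hc hα_eq
  have hW : 0 ≤ coeffW d := rpow_nonneg (by nlinarith) _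
  obtain ⟨hα, hsq⟩ := div_nonneg_lt_one_and_sq_mul_one_sub_div_sq_gt hW (by norm_num)
    (add_coeffW_lt_coeffC_of_mem_Ioc ⟨hd0, hd1⟩)
  exact ⟨hα, lt_trans (by norm_num) hsq⟩
end
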